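/- The special value α₀ satisfies (2 − 2cos(πα₀)) · (1 − t(α₀)) = 1. Consequently, for every indefinite-unitary matrix U = [[a, conj(b)], [b, conj(a)]] with |a|² − |b|² = 1 and |b|² = −t(α₀), the first Reichardt iterate U₁ := U·D(πα₀)·U^{−1}·D(πα₀)·U·D(πα₀)^{−2} is a diagonal matrix; that is, at α = α₀ a single Reichardt iteration exactly eliminates all leakage from the two-qubit computational state |00⟩ into the negative-norm non-computational state |NC₁⟩. -/

import Mathlib

open Complex Matrix

/-- The special neglecton parameter `α₀ = 2 − (2/π)·arcsin((1−√17)/8) ≈ 2.2553`. -/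
noncomputable def alpha0 : ℝ :=
  2 - (2 / Real.pi) * Real.arcsin ((1 - Real.sqrt 17) / 8)

/-- The coupling coefficient `t(α) = (cot(π(1+α)/4) − 1)/(cot(π(2+α)/4) − 1)`. -/
noncomputable def tcoef (α : ℝ) : ℝ :=
  (Real.cot (Real.pi * (1 + α) / 4) - 1) / (Real.cot (Real.pi * (2 + α) / 4) - 1)

/-- The z-rotation `D(θ) = diag(e^{iθ/2}, e^{-iθ/2})`. -/
noncomputable def Dmat (θ : ℝ) : Matrix (Fin 2) (Fin 2) ℂ :=
  !![Complex.exp (Complex.I * θ / 2), 0; 0, Complex.exp (-(Complex.I * θ / 2))]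

/-- The Reichardt iteration `U₀ = U`, `U_{k+1} = U_k D(θ) U_k⁻¹ D(θ) U_k D(θ)⁻²`. -/
noncomputable def reichardt (θ : ℝ) (U : Matrix (Fin 2) (Fin 2) ℂ) :
    ℕ → Matrix (Fin 2) (Fin 2) ℂ
  | 0 => U
  | k + 1 =>
      reichardt θ U k * Dmat θ * (reichardt θ U k)⁻¹ * Dmat θ * reichardt θ U k *
        (Dmat θ ^ 2)⁻¹

/-!
With `s = sin φ`, the substitution `α = 2 − (2/π)φ` turns `2 − 2cos(πα)` into `4s²` and `t(α)`
into `s/(1 + s)`, so the identity `(2 − 2cos(πα₀))(1 − t(α₀)) = 1` says `4s² = 1 + s`, of which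
`s = (1 − √17)/8` is a root.

For `U = [[a, c], [b, d]]` and `D = diag(E, E⁻¹)`, the off-diagonal entries of
`U D U⁻¹ D U D⁻²` are multiples of `ad(E² + E⁻² − 1) − bc`. For `U = [[a, b̄], [b, ā]]` and
`E = e^{iθ/2}` this is `|a|²(2cos θ − 1) − |b|²`; once `|a|² = 1 + |b|²` and `|b|² = −t(α₀)`, it
vanishes at `θ = πα₀` by the identity above.
-/

theorem cos_pi_mul_two_sub (φ : ℝ) :
    Real.cos (Real.pi * (2 - 2 / Real.pi * φ)) = 1 - 2 * Real.sin φ ^ 2 := by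
  have hangle : Real.pi * (2 - 2 / Real.pi * φ) = 2 * Real.pi - 2 * φ := by
    field_simp
  rw [hangle, Real.cos_two_pi_sub, Real.cos_two_mul', Real.cos_sq']
  ring

theorem tcoef_two_sub (φ : ℝ) (hsin : Real.sin φ ≠ 0) (hsin' : 1 + Real.sin φ ≠ 0) :
    tcoef (2 - 2 / Real.pi * φ) = Real.sin φ / (1 + Real.sin φ) := by
  have hangle₁ : Real.pi * (1 + (2 - 2 / Real.pi * φ)) / 4 = Real.pi - (Real.pi / 4 + φ / 2) := by
    field_simp; ring
  have hangle₂ : Real.pi * (2 + (2 - 2 / Real.pi * φ)) / 4 = Real.pi - φ / 2 := by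
    field_simp; ring
  have hsinφ : Real.sin φ = 2 * Real.sin (φ / 2) * Real.cos (φ / 2) := by
    rw [← Real.sin_two_mul]; ring_nf
  rw [tcoef, hangle₁, hangle₂, Real.cot_eq_cos_div_sin, Real.cot_eq_cos_div_sin,
    Real.cos_pi_sub, Real.sin_pi_sub, Real.cos_pi_sub, Real.sin_pi_sub,
    Real.cos_add, Real.sin_add, Real.cos_pi_div_four, Real.sin_pi_div_four, hsinφ]
  rw [hsinφ] at hsin hsin'
  set S := Real.sin (φ / 2)
  set C := Real.cos (φ / 2)
  have hsq : 1 + 2 * S * C = (C + S) ^ 2 := by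
    linear_combination -Real.sin_sq_add_cos_sq (φ / 2)
  have hS : S ≠ 0 := by rintro h; simp [h] at hsin
  have hCS : C + S ≠ 0 := by rintro h; simp [hsq, h] at hsin'
  have hnum : -(√2 / 2 * C - √2 / 2 * S) / (√2 / 2 * C + √2 / 2 * S) - 1 = -(2 * C) / (C + S) := by
    field_simp; ring
  have hden : -C / S - 1 = -(C + S) / S := by
    field_simp; ring
  rw [hnum, hden, hsq]
  field_simp

theorem two_sub_two_cos_mul_one_sub_tcoef_alpha0 :
    (2 - 2 * Real.cos (Real.pi * alpha0)) * (1 - tcoef alpha0) = 1 := by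
  set s := (1 - √17) / 8 with hs
  have h17 : √17 ^ 2 = 17 := Real.sq_sqrt (by norm_num)
  have hroot : 4 * s ^ 2 = 1 + s := by rw [hs]; linear_combination h17 / 16
  have hs_neg : s < 0 := by rw [hs]; nlinarith [Real.sqrt_nonneg 17]
  have hs_gt : -1 / 2 < s := by rw [hs]; nlinarith [Real.sqrt_nonneg 17]
  have hsin : Real.sin (Real.arcsin s) = s := Real.sin_arcsin (by linarith) (by linarith)
  have h1s : 1 + s ≠ 0 := by linarith
  rw [alpha0, cos_pi_mul_two_sub, tcoef_two_sub _ (by rw [hsin]; exact hs_neg.ne) (by rwa [hsin]),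
    hsin]
  field_simp
  linear_combination hroot

theorem inv_sq_diag_inv {K : Type*} [Field K] {E : K} (hE : E ≠ 0) :
    (!![E, 0; 0, E⁻¹] ^ 2)⁻¹ = !![E⁻¹ ^ 2, 0; 0, E ^ 2] := by
  refine inv_eq_left_inv ?_
  simp only [sq, mul_fin_two, one_fin_two]
  field_simp
  simp [hE]

theorem isDiag_reichardt_word {K : Type*} [Field K]
    (U : Matrix (Fin 2) (Fin 2) K) {E : K} (hE : E ≠ 0)
    (h : U 0 0 * U 1 1 * (E ^ 2 + E⁻¹ ^ 2 - 1) = U 0 1 * U 1 0) :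
    (U * !![E, 0; 0, E⁻¹] * U⁻¹ * !![E, 0; 0, E⁻¹] * U * (!![E, 0; 0, E⁻¹] ^ 2)⁻¹).IsDiag := by
  have hEE : E * E⁻¹ = 1 := mul_inv_cancel₀ hE
  rw [inv_sq_diag_inv hE, Matrix.inv_def, adjugate_fin_two, det_fin_two, eta_fin_two U]
  set δ := U 0 0 * U 1 1 - U 0 1 * U 1 0
  simp only [smul_of, mul_fin_two]
  intro i j hij
  fin_cases i <;> fin_cases j <;> simp at hij ⊢ <;> left
  · linear_combination δ⁻¹ * U 0 1 * h - δ⁻¹ * U 0 1 * (U 0 1 * U 1 0 + U 0 0 * U 1 1) * hEE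
  · linear_combination δ⁻¹ * U 1 0 * h - δ⁻¹ * U 1 0 * (U 0 1 * U 1 0 + U 0 0 * U 1 1) * hEE

theorem exp_half_sq_add_inv_sq (θ : ℝ) :
    exp (I * θ / 2) ^ 2 + (exp (I * θ / 2))⁻¹ ^ 2 = 2 * Complex.cos θ := by
  rw [two_cos, ← exp_neg, ← exp_nat_mul, ← exp_nat_mul]
  ring_nf

theorem Dmat_eq_exp_inv (θ : ℝ) : Dmat θ = !![exp (I * θ / 2), 0; 0, (exp (I * θ / 2))⁻¹] := by
  rw [Dmat, exp_neg]

theorem isDiag_reichardt_succ (θ : ℝ) (U : Matrix (Fin 2) (Fin 2) ℂ) (k : ℕ)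
    (h : reichardt θ U k 0 0 * reichardt θ U k 1 1 * (2 * Complex.cos θ - 1) =
      reichardt θ U k 0 1 * reichardt θ U k 1 0) :
    (reichardt θ U (k + 1)).IsDiag := by
  rw [reichardt, Dmat_eq_exp_inv]
  refine isDiag_reichardt_word _ (exp_ne_zero _) ?_
  rwa [exp_half_sq_add_inv_sq]

/-- At the special value `α₀`, `(2 − 2cos(πα₀))(1 − t(α₀)) = 1`, and consequently one
Reichardt iteration with `θ = πα₀` exactly eliminates all leakage: for every
indefinite-unitary `U = [[a, conj b],[b, conj a]]` with `|a|² − |b|² = 1` and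
`|b|² = −t(α₀)`, the first iterate `U₁` is diagonal. -/
theorem alpha0_eliminates_leakage :
    (2 - 2 * Real.cos (Real.pi * alpha0)) * (1 - tcoef alpha0) = 1 ∧
    ∀ a b : ℂ, ‖a‖ ^ 2 - ‖b‖ ^ 2 = 1 →
      ‖b‖ ^ 2 = -(tcoef alpha0) →
      (reichardt (Real.pi * alpha0)
          !![a, starRingEnd ℂ b; b, starRingEnd ℂ a] 1).IsDiag := by
  have hα₀ := two_sub_two_cos_mul_one_sub_tcoef_alpha0
  refine ⟨hα₀, fun a b hab hb => isDiag_reichardt_succ _ _ 0 ?_⟩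
  have hnorm : ‖a‖ ^ 2 * (2 * Real.cos (Real.pi * alpha0) - 1) = ‖b‖ ^ 2 := by
    rw [show ‖a‖ ^ 2 = 1 + ‖b‖ ^ 2 by linarith, hb]
    linear_combination -hα₀
  simp only [reichardt, of_apply, cons_val', cons_val_zero, cons_val_one, empty_val',
    cons_val_fin_one, mul_conj, mul_comm _ b, normSq_eq_norm_sq, ← ofReal_cos]
  exact_mod_cast hnorm
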